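/- For m, n positive integers with m ≠ n and β, L > 0, the double cosine family {cos(mπx/L)·cos(nπy/L)}_{m,n≥0} on [0,L]² satisfies: the function W(x,y) = Σ_{m,n≥0} a_{m,n} cos(mπx/L) cos(nπy/L) with a_{m,n} = −32βL²(cos((m+n)π) − 1)/((n²−m²)π²((m²+n²)π² + 4βL²)) for m,n>0, m≠n, a_{m,0} = −16βL²(1−cos(mπ))/(m²π²(m²π² + 4βL²)), a_{0,n} = −a_{n,0}, a_{m,m}=0, gives the Fourier coefficients of the solution of (∂ₓ²+∂_y² −4β)W = 4β·sign(y−x) on [0,L]² with Neumann boundary conditions; equivalently, for each (m,n), −((m²+n²)π²/L² + 4β)·a_{m,n} equals the Fourier coefficient of 4β·sign(y−x) with respect to the normalized Neumann eigenfunction cos(mπx/L)cos(nπy/L). -/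

import Mathlib

/-!
Write `K(m, n) = ∫∫_{[0,L]²} sign(y - x) cos(mπx/L) cos(nπy/L) dy dx`, so that the Neumann
coefficient of `4β sign(y - x)` is `(c_m c_n / L²) · 4β · K(m, n)`. Exchanging `x` and `y` shows
that `K` is antisymmetric: `K(n, n) = 0` and `K(m, 0) = -K(0, m)`. For `n ≠ 0` the inner integral
is `F(0) + F(L) - 2F(x) = -(2L/nπ) sin(nπx/L)` for the primitive `F` of `cos(nπy/L)`, and the
remaining `∫ cos(mπx/L) sin(nπx/L) dx` gives, for `m ≠ n`,
`K(m, n) = 2L²(1 - cos((m+n)π)) / ((m² - n²)π²)`. The factor `-((m² + n²)π²/L² + 4β)` cancels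
the last factor of the denominator of `a_{m,n}`, leaving `(c_m c_n / L²) · 4β · K(m, n)`.
-/

open Real Set MeasureTheory intervalIntegral

noncomputable def fourierCoefA (β L : ℝ) (m n : ℕ) : ℝ :=
  if m = n then 0
  else if n = 0 then
    -16 * β * L^2 * (1 - Real.cos (m * π)) / ((m:ℝ)^2 * π^2 * ((m:ℝ)^2 * π^2 + 4 * β * L^2))
  else if m = 0 then
    -(-16 * β * L^2 * (1 - Real.cos (n * π)) / ((n:ℝ)^2 * π^2 * ((n:ℝ)^2 * π^2 + 4 * β * L^2)))
  else
    -32 * β * L^2 * (Real.cos ((m + n : ℕ) * π) - 1)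
      / (((n:ℝ)^2 - (m:ℝ)^2) * π^2 * (((m:ℝ)^2 + (n:ℝ)^2) * π^2 + 4 * β * L^2))

noncomputable def neumannCoef (L : ℝ) (g : ℝ → ℝ → ℝ) (m n : ℕ) : ℝ :=
  ((if m = 0 then (1:ℝ) else 2) * (if n = 0 then (1:ℝ) else 2) / L^2)
    * ∫ x in (0:ℝ)..L, ∫ y in (0:ℝ)..L, g x y * Real.cos (m * π * x / L) * Real.cos (n * π * y / L)

theorem natCast_sq_sub_sq_ne_zero {m n : ℕ} (h : m ≠ n) : (m : ℝ) ^ 2 - n ^ 2 ≠ 0 :=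
  sub_ne_zero.mpr (by exact_mod_cast (Nat.pow_left_injective two_ne_zero).ne h)

@[fun_prop]
theorem Real.measurable_sign : Measurable Real.sign :=
  Measurable.ite measurableSet_Iio measurable_const
    (Measurable.ite measurableSet_Ioi measurable_const measurable_const)

theorem Real.abs_sign_le_one (r : ℝ) : |Real.sign r| ≤ 1 := by
  rcases Real.sign_apply_eq r with h | h | h <;> simp [h]

theorem IntervalIntegrable.sign_sub_mul {f : ℝ → ℝ} {a b : ℝ} (x : ℝ)
    (hf : IntervalIntegrable f volume a b) :
    IntervalIntegrable (fun y => Real.sign (y - x) * f y) volume a b := by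
  rw [intervalIntegrable_iff] at hf ⊢
  exact hf.bdd_mul (c := 1)
    (Real.measurable_sign.comp (measurable_id.sub_const x)).aestronglyMeasurable
    (ae_of_all _ fun y => Real.abs_sign_le_one _)

theorem integral_sign_sub_mul_eq_of_hasDerivAt {f F : ℝ → ℝ} {a b x : ℝ} (hx : x ∈ Icc a b)
    (hF : ∀ y ∈ Icc a b, HasDerivAt F (f y) y) (hf : IntervalIntegrable f volume a b) :
    ∫ y in a..b, Real.sign (y - x) * f y = F a + F b - 2 * F x := by
  have hx' : x ∈ uIcc a b := Icc_subset_uIcc hx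
  have hF' : ∀ y ∈ uIcc a b, HasDerivAt F (f y) y := by rwa [uIcc_of_le (hx.1.trans hx.2)]
  have hf_ax := hf.mono_set (uIcc_subset_uIcc_left hx')
  have hf_xb := hf.mono_set (uIcc_subset_uIcc_right hx')
  have h_left : ∫ y in a..x, Real.sign (y - x) * f y = -(F x - F a) := by
    rw [← integral_eq_sub_of_hasDerivAt (fun y hy => hF' y (uIcc_subset_uIcc_left hx' hy)) hf_ax,
      ← intervalIntegral.integral_neg]
    have h_ne : ∀ᵐ y, y ≠ x := ae_iff.mpr (by simp)
    refine intervalIntegral.integral_congr_ae (h_ne.mono fun y hyx hy => ?_)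
    rw [uIoc_of_le hx.1] at hy
    rw [Real.sign_of_neg (sub_neg.mpr (hy.2.lt_of_ne hyx)), neg_one_mul]
  have h_right : ∫ y in x..b, Real.sign (y - x) * f y = F b - F x := by
    rw [← integral_eq_sub_of_hasDerivAt (fun y hy => hF' y (uIcc_subset_uIcc_right hx' hy)) hf_xb]
    refine intervalIntegral.integral_congr_ae (ae_of_all _ fun y hy => ?_)
    rw [uIoc_of_le hx.2] at hy
    rw [Real.sign_of_pos (sub_pos.mpr hy.1), one_mul]
  rw [← integral_add_adjacent_intervals (hf_ax.sign_sub_mul x) (hf_xb.sign_sub_mul x),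
    h_left, h_right]
  ring

theorem hasDerivAt_cos_mul_sin_primitive {a b : ℝ} (hab : a ^ 2 ≠ b ^ 2) (x : ℝ) :
    HasDerivAt
      (fun x => -(b * cos (a * x) * cos (b * x) + a * sin (a * x) * sin (b * x)) / (b ^ 2 - a ^ 2))
      (cos (a * x) * sin (b * x)) x := by
  have hlin (c : ℝ) : HasDerivAt (fun x => c * x) c x := by
    simpa using (hasDerivAt_id x).const_mul c
  have hcos (c : ℝ) := (hasDerivAt_cos (c * x)).comp x (hlin c)
  have hsin (c : ℝ) := (hasDerivAt_sin (c * x)).comp x (hlin c)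
  refine ((((hcos a).const_mul b).mul (hcos b)).add
    (((hsin a).const_mul a).mul (hsin b))).neg.div_const (b ^ 2 - a ^ 2) |>.congr_deriv ?_
  simp only [Function.comp_apply]
  field_simp [sub_ne_zero.mpr hab.symm]
  ring

noncomputable def signCosCosIntegral (L : ℝ) (m n : ℕ) : ℝ :=
  ∫ x in (0:ℝ)..L, ∫ y in (0:ℝ)..L, Real.sign (y - x) * cos (m * π * x / L) * cos (n * π * y / L)

theorem signCosCosIntegral_swap (L : ℝ) (m n : ℕ) :
    signCosCosIntegral L m n = -signCosCosIntegral L n m := by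
  have h_int : IntegrableOn (Function.uncurry fun x y =>
      Real.sign (y - x) * cos (m * π * x / L) * cos (n * π * y / L)) (uIoc 0 L ×ˢ uIoc 0 L) := by
    refine Measure.integrableOn_of_bounded (M := 1) ?_ (by fun_prop) (ae_of_all _ fun p => ?_)
    · rw [Measure.volume_eq_prod, Measure.prod_prod]
      exact ENNReal.mul_ne_top measure_Ioc_lt_top.ne measure_Ioc_lt_top.ne
    · rw [Function.uncurry_def, Real.norm_eq_abs, abs_mul, abs_mul]
      exact mul_le_one₀ (mul_le_one₀ (Real.abs_sign_le_one _) (abs_nonneg _) (abs_cos_le_one _))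
        (abs_nonneg _) (abs_cos_le_one _)
  rw [signCosCosIntegral, intervalIntegral_intervalIntegral_swap h_int, signCosCosIntegral,
    ← intervalIntegral.integral_neg]
  congr 1 with x
  rw [← intervalIntegral.integral_neg]
  congr 1 with y
  rw [← neg_sub, Real.sign_neg]
  ring

theorem signCosCosIntegral_self (L : ℝ) (n : ℕ) : signCosCosIntegral L n n = 0 := by
  linarith [signCosCosIntegral_swap L n n]

theorem integral_cos_mul_sin_nat {L : ℝ} (hL : L ≠ 0) {m n : ℕ} (hmn : m ≠ n) :
    ∫ x in (0:ℝ)..L, cos (m * π * x / L) * sin (n * π * x / L)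
      = L * n * (cos ((m + n : ℕ) * π) - 1) / ((m ^ 2 - n ^ 2) * π) := by
  have hmn' := natCast_sq_sub_sq_ne_zero hmn
  have hnm := natCast_sq_sub_sq_ne_zero hmn.symm
  have hsq : ((m : ℝ) * π / L) ^ 2 ≠ ((n : ℝ) * π / L) ^ 2 := fun h =>
    mul_ne_zero hmn' (pow_ne_zero 2 (div_ne_zero pi_ne_zero hL)) (by linear_combination h)
  have h_rescale (c x : ℝ) : c * π * x / L = c * π / L * x := by ring
  simp only [h_rescale]
  rw [integral_eq_sub_of_hasDerivAt (fun x _ => hasDerivAt_cos_mul_sin_primitive hsq x)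
    ((by fun_prop : Continuous _).intervalIntegrable _ _)]
  have hmL : (m : ℝ) * π / L * L = m * π := div_mul_cancel₀ _ hL
  have hnL : (n : ℝ) * π / L * L = n * π := div_mul_cancel₀ _ hL
  have hcos_add : cos ((m + n : ℕ) * π) = cos (m * π) * cos (n * π) := by
    rw [Nat.cast_add, add_mul, cos_add, sin_nat_mul_pi, zero_mul, sub_zero]
  rw [hmL, hnL, hcos_add, sin_nat_mul_pi, sin_nat_mul_pi]
  simp only [mul_zero, cos_zero, sin_zero]
  field_simp
  ring

theorem integral_sign_sub_mul_cos_nat {L : ℝ} (hL : L ≠ 0) {n : ℕ} (hn : n ≠ 0) {x : ℝ}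
    (hx : x ∈ Icc 0 L) :
    ∫ y in (0:ℝ)..L, Real.sign (y - x) * cos (n * π * y / L)
      = -2 * (L / (n * π)) * sin (n * π * x / L) := by
  have hnπ : (n : ℝ) * π ≠ 0 := mul_ne_zero (Nat.cast_ne_zero.mpr hn) pi_ne_zero
  have hF (y : ℝ) :
      HasDerivAt (fun y => L / (n * π) * sin (n * π * y / L)) (cos (n * π * y / L)) y := by
    refine ((((hasDerivAt_id y).const_mul ((n : ℝ) * π)).div_const L).sin.const_mul
      (L / (n * π))).congr_deriv ?_
    simp only [id]
    field_simp
  rw [integral_sign_sub_mul_eq_of_hasDerivAt hx (fun y _ => hF y)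
    ((by fun_prop : Continuous _).intervalIntegrable _ _), mul_div_cancel_right₀ _ hL,
    sin_nat_mul_pi]
  simp only [mul_zero, zero_div, sin_zero]
  ring

theorem signCosCosIntegral_of_ne_zero {L : ℝ} (hL : 0 < L) {m n : ℕ} (hn : n ≠ 0) (hmn : m ≠ n) :
    signCosCosIntegral L m n
      = 2 * L ^ 2 * (1 - cos ((m + n : ℕ) * π)) / ((m ^ 2 - n ^ 2) * π ^ 2) := by
  have h_inner : EqOn
      (fun x => ∫ y in (0:ℝ)..L, Real.sign (y - x) * cos (m * π * x / L) * cos (n * π * y / L))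
      (fun x => -2 * (L / (n * π)) * (cos (m * π * x / L) * sin (n * π * x / L))) (uIcc 0 L) := by
    intro x hx
    rw [uIcc_of_le hL.le] at hx
    simp only [mul_right_comm _ (cos (m * π * x / L)), intervalIntegral.integral_mul_const,
      integral_sign_sub_mul_cos_nat hL.ne' hn hx]
    ring
  rw [signCosCosIntegral, integral_congr h_inner, intervalIntegral.integral_const_mul,
    integral_cos_mul_sin_nat hL.ne' hmn]
  have hmn' := natCast_sq_sub_sq_ne_zero hmn
  field_simp
  ring

theorem signCosCosIntegral_of_ne {L : ℝ} (hL : 0 < L) {m n : ℕ} (hmn : m ≠ n) :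
    signCosCosIntegral L m n
      = 2 * L ^ 2 * (1 - cos ((m + n : ℕ) * π)) / ((m ^ 2 - n ^ 2) * π ^ 2) := by
  rcases eq_or_ne n 0 with rfl | hn
  · rw [signCosCosIntegral_swap, signCosCosIntegral_of_ne_zero hL hmn hmn.symm]
    simp only [Nat.cast_zero, zero_add, add_zero]
    ring
  · exact signCosCosIntegral_of_ne_zero hL hn hmn

theorem neumannCoef_const_mul_sign (c L : ℝ) (m n : ℕ) :
    neumannCoef L (fun x y => c * Real.sign (y - x)) m n
      = ((if m = 0 then (1:ℝ) else 2) * (if n = 0 then (1:ℝ) else 2) / L ^ 2)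
        * (c * signCosCosIntegral L m n) := by
  rw [neumannCoef, signCosCosIntegral, ← intervalIntegral.integral_const_mul c]
  congr 1
  refine intervalIntegral.integral_congr fun x _ => ?_
  rw [← intervalIntegral.integral_const_mul]
  refine intervalIntegral.integral_congr fun y _ => ?_
  ring

theorem fourierCoefA_of_ne (β L : ℝ) {m n : ℕ} (hmn : m ≠ n) :
    fourierCoefA β L m n
      = -((if m = 0 then (1:ℝ) else 2) * (if n = 0 then (1:ℝ) else 2)) * 8 * β * L ^ 2
          * (1 - cos ((m + n : ℕ) * π))
          / ((m ^ 2 - n ^ 2) * π ^ 2 * ((m ^ 2 + n ^ 2) * π ^ 2 + 4 * β * L ^ 2)) := by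
  rcases eq_or_ne n 0 with rfl | hn
  · simp only [fourierCoefA, hmn, if_true, if_false, Nat.cast_zero, add_zero]
    ring
  rcases eq_or_ne m 0 with rfl | hm
  · simp only [fourierCoefA, hmn, hn, if_true, if_false, Nat.cast_zero, zero_add, ne_eq,
      OfNat.ofNat_ne_zero, not_false_eq_true, zero_pow, zero_sub, neg_mul, div_neg]
    ring
  simp only [fourierCoefA, hmn, hn, hm, if_false, ← neg_sub ((m : ℝ) ^ 2), neg_mul, div_neg]
  ring

theorem fourier_coefficients_absorbing (β L : ℝ) (hβ : 0 < β) (hL : 0 < L) :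
    ∀ m n : ℕ,
      -((((m:ℝ)^2 + (n:ℝ)^2) * π^2 / L^2) + 4 * β) * fourierCoefA β L m n
        = neumannCoef L (fun x y => 4 * β * Real.sign (y - x)) m n := by
  intro m n
  rw [neumannCoef_const_mul_sign]
  rcases eq_or_ne m n with rfl | hmn
  · simp [fourierCoefA, signCosCosIntegral_self]
  rw [fourierCoefA_of_ne β L hmn, signCosCosIntegral_of_ne hL hmn]
  have hmn' := natCast_sq_sub_sq_ne_zero hmn
  have hden : ((m : ℝ) ^ 2 + n ^ 2) * π ^ 2 + 4 * β * L ^ 2 ≠ 0 := by positivity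
  field_simp
  ring
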